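/- arXiv:1409.0198 — 2 statements merged into one kernel-verified Lean document; each statement's English description precedes it below -/
import Mathlib

section
/- For every positive integer k, the following identity holds: ∑_{m=1}^∞ 1/sinh(mπ)^{2k} = (1/π) ∑_{m=1}^∞ lim_{N→∞} ∑_{-N≤n≤N} (-1)^n / (sinh(mπ)^{2k-1}(m+ni)). -/
/-!
For `a ∉ iℤ` the 1-periodic extension of `x ↦ cosh (2πa (x - 1/2))` on `[0, 1]` is continuous,
and its Fourier coefficients `sinh (πa) / (2π) · (1/(a - ni) + 1/(a + ni))` are summable, so the
Fourier series converges to it everywhere. At `x = 1/2`, where the function is `1` and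
`e^{2πinx} = (-1)^n`, this gives `∑ₙ (-1)^n (1/(a - ni) + 1/(a + ni)) = 2π / sinh (πa)`, and pairing
`n` with `-n` shows that the symmetric partial sums of `(-1)^n / (a + ni)` tend to `π / sinh (πa)`.
For `a = m` the inner limits are therefore `π / sinh (mπ)^{2k}`, and the outer identity only
pulls out the factor `π`.
-/

open Complex Filter MeasureTheory SummationFilter
open scoped Real

theorem fourierCoeffOn_add {a b : ℝ} (hab : a < b) {f g : ℝ → ℂ}
    (hf : IntervalIntegrable f volume a b) (hg : IntervalIntegrable g volume a b) (n : ℤ) :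
    fourierCoeffOn hab (f + g) n = fourierCoeffOn hab f n + fourierCoeffOn hab g n := by
  have hχ : ContinuousOn (fun x : ℝ => fourier (-n) (x : AddCircle (b - a)) : ℝ → ℂ)
      (Set.uIcc a b) := (by fun_prop : Continuous _).continuousOn
  simp only [fourierCoeffOn_eq_integral, Pi.add_apply, smul_eq_mul, mul_add]
  rw [intervalIntegral.integral_add (hf.continuousOn_mul hχ) (hg.continuousOn_mul hχ), smul_add]

theorem fourierCoeffOn_exp_mul {c : ℂ} {n : ℤ} (hc : c ≠ 2 * π * I * n) :
    fourierCoeffOn zero_lt_one (fun x : ℝ => exp (c * x)) n =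
      (exp c - 1) / (c - 2 * π * I * n) := by
  have hc' : c - 2 * π * I * n ≠ 0 := sub_ne_zero.mpr hc
  have hχ (x : ℝ) : fourier (-n) (x : AddCircle ((1 : ℝ) - 0)) • exp (c * x) =
      exp ((c - 2 * π * I * n) * x) := by
    rw [fourier_coe_apply, smul_eq_mul, ← exp_add]
    push_cast
    ring_nf
  have hperiod : exp (c - 2 * π * I * n) = exp c := by
    rw [exp_sub, mul_comm _ (n : ℂ), exp_int_mul_two_pi_mul_I, div_one]
  simp only [fourierCoeffOn_eq_integral, hχ, integral_exp_mul_complex hc']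
  simp [hperiod]

theorem hasSum_fourierCoeffOn_mul_fourier {a b : ℝ} (hab : a < b) {f : ℝ → ℂ}
    (hf : ContinuousOn f (Set.Icc a b)) (hper : f a = f b) (hs : Summable (fourierCoeffOn hab f))
    {x : ℝ} (hx : x ∈ Set.Ioc a b) :
    HasSum (fun n => fourierCoeffOn hab f n * fourier n (x : AddCircle (b - a))) (f x) := by
  have : Fact (0 < b - a) := ⟨sub_pos.mpr hab⟩
  have hab' : a + (b - a) = b := add_sub_cancel a b
  let F : C(AddCircle (b - a), ℂ) :=
    ⟨AddCircle.liftIoc (b - a) a f, by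
      rw [AddCircle.liftIoc_eq_liftIco (by rwa [hab'])]
      exact AddCircle.liftIco_continuous (by rwa [hab']) (by rwa [hab'])⟩
  have hFx : F x = f x := AddCircle.liftIoc_coe_apply (by rwa [hab'])
  rw [← hFx]
  exact has_pointwise_sum_fourier_series_of_summable (f := F) hs x

theorem fourier_coe_half_period {T : ℝ} (hT : T ≠ 0) (n : ℤ) :
    fourier n ((T / 2 : ℝ) : AddCircle T) = (-1 : ℂ) ^ n := by
  have hT' : (T : ℂ) ≠ 0 := ofReal_ne_zero.mpr hT
  rw [fourier_coe_apply]
  push_cast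
  rw [show (2 : ℂ) * π * I * n * (T / 2) / T = n * (π * I) by field_simp, exp_int_mul,
    exp_pi_mul_I]

theorem HasSum.hasSum_symmetricIcc_of_add_neg {E : Type*} [NormedAddCommGroup E]
    [NormedSpace ℝ E] {f : ℤ → E} {a : E} (h : HasSum (fun n => f n + f (-n)) (2 • a)) :
    HasSum f a (symmetricIcc ℤ) := by
  have hreflect (N : ℕ) :
      ∑ n ∈ Finset.Icc (-(N : ℤ)) N, f (-n) = ∑ n ∈ Finset.Icc (-(N : ℤ)) N, f n :=
    Finset.sum_nbij' (fun n => -n) (fun n => -n) (by simp; omega) (by simp; omega)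
      (by simp) (by simp) (by simp)
  have h₂ : HasSum (fun n => f n + f (-n)) (2 • a) (symmetricIcc ℤ) :=
    h.mono_left (symmetricIcc ℤ).le_atTop
  rw [hasSum_symmetricIcc_iff] at h₂ ⊢
  convert h₂.const_smul (2⁻¹ : ℝ) using 1
  · ext N
    rw [Finset.sum_add_distrib, hreflect, ← two_nsmul, ← ofNat_smul_eq_nsmul ℝ, smul_smul]
    norm_num
  · rw [← ofNat_smul_eq_nsmul ℝ, smul_smul]
    norm_num

theorem add_intCast_mul_I_ne_zero {a : ℂ} (ha : ∀ n : ℤ, a ≠ n * I) (n : ℤ) : a + n * I ≠ 0 := by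
  simpa [sub_eq_add_neg] using sub_ne_zero.mpr (ha (-n))

noncomputable def coshArch (a : ℂ) (x : ℝ) : ℂ := cosh (2 * π * a * (x - 1 / 2))

theorem coshArch_eq_exp (a : ℂ) :
    coshArch a = (fun x : ℝ => exp (-(π * a)) / 2 * exp (2 * π * a * x)) +
      fun x : ℝ => exp (π * a) / 2 * exp (-(2 * π * a) * x) := by
  ext x
  simp only [coshArch, Complex.cosh, Pi.add_apply, div_mul_eq_mul_div, ← exp_add, ← add_div]
  ring_nf

theorem fourierCoeffOn_coshArch {a : ℂ} (ha : ∀ n : ℤ, a ≠ n * I) (n : ℤ) :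
    fourierCoeffOn zero_lt_one (coshArch a) n =
      sinh (π * a) / (2 * π) * ((a - n * I)⁻¹ + (a + n * I)⁻¹) := by
  have hsub : a - n * I ≠ 0 := sub_ne_zero.mpr (ha n)
  have hadd := add_intCast_mul_I_ne_zero ha n
  have hπ : (π : ℂ) ≠ 0 := ofReal_ne_zero.mpr Real.pi_ne_zero
  have hc₁ : 2 * π * a ≠ 2 * π * I * n := fun h => hsub <| by
    have : (2 * π : ℂ) * (a - n * I) = 0 := by linear_combination h
    simpa [hπ] using this
  have hc₂ : -(2 * π * a) ≠ 2 * π * I * n := fun h => hadd <| by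
    have : (2 * π : ℂ) * (a + n * I) = 0 := by linear_combination -h
    simpa [hπ] using this
  rw [coshArch_eq_exp, fourierCoeffOn_add _ (by apply Continuous.intervalIntegrable; fun_prop)
      (by apply Continuous.intervalIntegrable; fun_prop),
    fourierCoeffOn.const_mul, fourierCoeffOn.const_mul, fourierCoeffOn_exp_mul hc₁,
    fourierCoeffOn_exp_mul hc₂,
    show 2 * π * a - 2 * π * I * n = 2 * π * (a - n * I) by ring,
    show -(2 * π * a) - 2 * π * I * n = -(2 * π * (a + n * I)) by ring]
  have hexp : exp (2 * π * a) = exp (π * a) ^ 2 := by rw [← exp_nat_mul]; ring_nf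
  simp only [Complex.sinh, exp_neg, hexp]
  have hu : exp (π * a) ≠ 0 := exp_ne_zero _
  generalize exp (π * a) = u at *
  field_simp
  ring

theorem summable_inv_sub_add_inv_add {a : ℂ} (ha : ∀ n : ℤ, a ≠ n * I) :
    Summable fun n : ℤ => (a - n * I)⁻¹ + (a + n * I)⁻¹ := by
  refine ((EisensteinSeries.summable_linear_sub_mul_linear_add (a * I) 1 1).mul_left
    (-2 * a)).congr fun n => ?_
  have hsub : a - n * I ≠ 0 := sub_ne_zero.mpr (ha n)
  have hadd := add_intCast_mul_I_ne_zero ha n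
  have hprod : (a * I - n) * (a * I + n) = -((a - n * I) * (a + n * I)) := by
    linear_combination (a ^ 2 - n ^ 2) * I_sq
  simp only [Int.cast_one, one_mul]
  rw [hprod]
  field_simp
  ring

theorem hasSum_neg_one_zpow_mul_inv_sub_add_inv_add {a : ℂ} (ha : ∀ n : ℤ, a ≠ n * I) :
    HasSum (fun n : ℤ => (-1) ^ n * ((a - n * I)⁻¹ + (a + n * I)⁻¹)) (2 * π / sinh (π * a)) := by
  have hcoeff := funext (fourierCoeffOn_coshArch ha)
  have hsum : HasSum (fun n : ℤ => sinh (π * a) / (2 * π) *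
      ((-1) ^ n * ((a - n * I)⁻¹ + (a + n * I)⁻¹))) 1 := by
    have h := hasSum_fourierCoeffOn_mul_fourier zero_lt_one
      (by unfold coshArch; fun_prop : Continuous (coshArch a)).continuousOn
      (by simp only [coshArch]; rw [← cosh_neg]; push_cast; ring_nf)
      (hcoeff ▸ (summable_inv_sub_add_inv_add ha).mul_left _)
      (x := (1 - 0) / 2) ⟨by norm_num, by norm_num⟩
    rw [show coshArch a ((1 - 0) / 2) = 1 by simp [coshArch]] at h
    refine h.congr_fun fun n => ?_
    rw [hcoeff, fourier_coe_half_period (by norm_num)]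
    ring
  -- otherwise every Fourier coefficient vanishes, while the series sums to `1`
  have hsinh : sinh (π * a) ≠ 0 := by
    intro h0
    simp only [h0, zero_div, zero_mul] at hsum
    exact one_ne_zero (hsum.unique hasSum_zero)
  have hπ : (π : ℂ) ≠ 0 := ofReal_ne_zero.mpr Real.pi_ne_zero
  have hcancel : 2 * π / sinh (π * a) * (sinh (π * a) / (2 * π)) = 1 := by field_simp
  have h := hsum.mul_left (2 * π / sinh (π * a))
  rw [mul_one] at h
  refine h.congr_fun fun n => ?_
  rw [← mul_assoc, hcancel, one_mul]

theorem hasSum_symmetricIcc_neg_one_zpow_div {a : ℂ} (ha : ∀ n : ℤ, a ≠ n * I) :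
    HasSum (fun n : ℤ => (-1) ^ n / (a + n * I)) (π / sinh (π * a)) (symmetricIcc ℤ) := by
  apply HasSum.hasSum_symmetricIcc_of_add_neg
  rw [two_nsmul, ← two_mul, ← mul_div_assoc]
  refine (hasSum_neg_one_zpow_mul_inv_sub_add_inv_add ha).congr_fun fun n => ?_
  rw [zpow_neg, ← inv_zpow, inv_neg, inv_one]
  push_cast
  ring

theorem sinh_power_sum_identity (k : ℕ) (hk : 0 < k) :
    ∃ g : ℕ → ℂ,
      (∀ m : ℕ,
          Tendsto (fun N : ℕ =>
              ∑ n ∈ Finset.Icc (-(N : ℤ)) (N : ℤ),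
                (-1 : ℂ) ^ n /
                  (Complex.sinh (((m : ℂ) + 1) * Real.pi) ^ (2 * k - 1) *
                    ((m : ℂ) + 1 + (n : ℂ) * Complex.I)))
            atTop (nhds (g m))) ∧
        (∑' m : ℕ, 1 / Complex.sinh (((m : ℂ) + 1) * Real.pi) ^ (2 * k)) =
          1 / (Real.pi : ℂ) * ∑' m : ℕ, g m := by
  refine ⟨fun m => π / sinh (((m : ℂ) + 1) * π) ^ (2 * k), fun m => ?_, ?_⟩
  · have ha : ∀ n : ℤ, (m : ℂ) + 1 ≠ n * I := fun n h => by
      have hre := congrArg re h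
      simp only [add_re, natCast_re, one_re, mul_re, intCast_re, I_re, mul_zero, intCast_im,
        I_im, mul_one, sub_self] at hre
      exact absurd hre (by positivity)
    have h := (hasSum_symmetricIcc_neg_one_zpow_div ha).mul_left
      (sinh (((m : ℂ) + 1) * π) ^ (2 * k - 1))⁻¹
    rw [hasSum_symmetricIcc_iff] at h
    convert h using 2
    · exact Finset.sum_congr rfl fun n _ => by rw [div_mul_eq_div_div_swap, div_eq_inv_mul]
    · rw [mul_comm (π : ℂ), inv_mul_eq_div, div_div, ← pow_succ', Nat.sub_add_cancel (by omega)]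
  · simp_rw [div_eq_mul_one_div (π : ℂ) (sinh _ ^ _), tsum_mul_left]
    rw [← mul_assoc, one_div_mul_cancel (ofReal_ne_zero.mpr Real.pi_ne_zero), one_mul]
end

section
/- For every positive integer k and complex q with |q| < 1, the identity ∑_{m∈ℤ} 1/((q^{2m+1}+q^{-2m-1})(q^{2(m-k)+1}+q^{-2(m-k)-1})) = -k/(q^{2k}-q^{-2k}) holds. -/
/-!
With `f m = 1 / (1 + q ^ (4m+2))` and `v = q ^ (2k)`, a partial-fraction identity turns the
`m`-th term into `(f (m - k) - f m) / (v - v⁻¹)`. As `|q| < 1`, `f` tends to `1` at `+∞` and to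
`0` at `-∞` geometrically fast, i.e. `f` differs from the step function `𝟙[0 ≤ m]` by a summable
function. The shift-invariance of sums over `ℤ` then leaves only the step function's contribution:
`∑ m, (f (m - k) - f m) = -#{m | 0 ≤ m < k} = -k`.
-/

open Filter Topology

theorem Summable.div_one_add {ι 𝕜 : Type*} [NormedField 𝕜] [CompleteSpace 𝕜] {s : ι → 𝕜}
    (hs : Summable fun n => ‖s n‖) : Summable fun n => s n / (1 + s n) := by
  have hlim : Tendsto (fun n => (1 + s n)⁻¹) cofinite (𝓝 1) := by
    simpa using ((tendsto_const_nhds (x := (1 : 𝕜))).add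
      hs.of_norm.tendsto_cofinite_zero).inv₀ (by simp)
  simpa only [div_eq_mul_inv] using hs.mul_tendsto_const hlim

theorem hasSum_comp_sub_sub_of_summable_sub_step {E : Type*} [AddCommGroup E]
    [TopologicalSpace E] [IsTopologicalAddGroup E] {g : ℤ → E} {c : E}
    (hg : Summable fun m => g m - if 0 ≤ m then c else 0) (k : ℕ) :
    HasSum (fun m => g (m - k) - g m) (-(k • c)) := by
  obtain ⟨s, hs⟩ := hg
  have hshift : HasSum (fun m => g (m - k) - if 0 ≤ m - k then c else 0) s :=
    (Equiv.subRight (k : ℤ)).hasSum_iff (f := fun m => g m - if 0 ≤ m then c else 0) |>.mpr hs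
  have hstep : HasSum (fun m => if m ∈ Finset.Ico 0 (k : ℤ) then c else 0) (k • c) := by
    have hsum :
        ∑ m ∈ Finset.Ico 0 (k : ℤ), (if m ∈ Finset.Ico 0 (k : ℤ) then c else 0) = k • c := by
      rw [Finset.sum_ite_of_true fun _ h => h, Finset.sum_const, Int.card_Ico, sub_zero,
        Int.toNat_natCast]
    exact hsum ▸ hasSum_sum_of_ne_finset_zero fun m hm => if_neg hm
  convert (hshift.sub hs).sub hstep using 1
  · ext m
    simp only [Finset.mem_Ico]
    split_ifs <;> first | omega | abel
  · abel

theorem one_div_add_inv_mul_add_inv_of_eq_mul {K : Type*} [Field K] {a b v : K}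
    (hab : a = b * v) (hb : b ≠ 0) (hv : v ≠ 0) (ha1 : 1 + a ^ 2 ≠ 0) (hb1 : 1 + b ^ 2 ≠ 0)
    (hv1 : v ^ 2 ≠ 1) :
    1 / ((a + a⁻¹) * (b + b⁻¹)) = (1 / (1 + b ^ 2) - 1 / (1 + a ^ 2)) / (v - v⁻¹) := by
  have ha : a ≠ 0 := hab ▸ mul_ne_zero hb hv
  have hv1' : v ^ 2 - 1 ≠ 0 := sub_ne_zero.mpr hv1
  rw [show a + a⁻¹ = (1 + a ^ 2) / a by field_simp; ring,
    show b + b⁻¹ = (1 + b ^ 2) / b by field_simp; ring,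
    show v - v⁻¹ = (v ^ 2 - 1) / v by field_simp]
  field_simp
  subst hab
  ring

theorem norm_zpow_ne_one {𝕜 : Type*} [NormedDivisionRing 𝕜] {q : 𝕜} (hq0 : q ≠ 0)
    (hq : ‖q‖ ≠ 1) {n : ℤ} (hn : n ≠ 0) : ‖q ^ n‖ ≠ 1 := by
  rw [norm_zpow, ← zpow_zero ‖q‖]
  exact fun h => hn (zpow_right_injective₀ (norm_pos_iff.mpr hq0) hq h)

theorem one_add_sq_zpow_ne_zero {𝕜 : Type*} [NormedDivisionRing 𝕜] {q : 𝕜} (hq0 : q ≠ 0)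
    (hq : ‖q‖ ≠ 1) {n : ℤ} (hn : n ≠ 0) : 1 + (q ^ n) ^ 2 ≠ 0 := by
  intro h
  apply norm_zpow_ne_one hq0 hq (mul_ne_zero hn two_ne_zero)
  rw [zpow_mul, zpow_ofNat, eq_neg_of_add_eq_zero_right h, norm_neg, norm_one]

theorem summable_one_div_one_add_sq_zpow_sub_step {q : ℂ} (hq0 : q ≠ 0) (hq : ‖q‖ < 1) :
    Summable fun m : ℤ => 1 / (1 + (q ^ (2 * m + 1)) ^ 2) - if 0 ≤ m then 1 else 0 := by
  have hzpow (n : ℕ) : q ^ (2 * (n : ℤ) + 1) = q ^ (2 * n + 1) := by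
    rw [← zpow_natCast]; push_cast; rfl
  have hs : Summable fun n : ℕ => ‖(q ^ (2 * n + 1)) ^ 2‖ := by
    have hr : ‖q‖ ^ 4 < 1 := pow_lt_one₀ (norm_nonneg _) hq (by norm_num)
    refine ((summable_geometric_of_lt_one (by positivity) hr).mul_left (‖q‖ ^ 2)).congr
      fun n => ?_
    rw [norm_pow, norm_pow]
    ring
  have hs1 (n : ℕ) : 1 + (q ^ (2 * n + 1)) ^ 2 ≠ 0 := by
    simpa only [hzpow] using one_add_sq_zpow_ne_zero hq0 hq.ne (n := 2 * n + 1) (by omega)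
  refine .of_nat_of_neg_add_one ((Summable.div_one_add hs).neg.congr fun n => ?_)
    ((Summable.div_one_add hs).congr fun n => ?_)
  · rw [hzpow, if_pos (Int.natCast_nonneg n), div_sub_one (hs1 n)]
    ring
  · have hinv : q ^ (2 * (-((n : ℤ) + 1)) + 1) = (q ^ (2 * n + 1))⁻¹ := by
      rw [← hzpow, ← zpow_neg]; ring_nf
    have hne : q ^ (2 * n + 1) ≠ 0 := pow_ne_zero _ hq0
    rw [hinv, if_neg (by omega), sub_zero]
    field_simp
    ring

theorem key_q_identity (k : ℕ) (hk : 0 < k) (q : ℂ) (hq0 : q ≠ 0) (hq : ‖q‖ < 1) :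
    (∑' m : ℤ,
        1 / ((q ^ (2 * m + 1) + q ^ (-2 * m - 1)) *
          (q ^ (2 * (m - (k : ℤ)) + 1) + q ^ (-2 * (m - (k : ℤ)) - 1)))) =
      -(k : ℂ) / (q ^ (2 * (k : ℤ)) - q ^ (-2 * (k : ℤ))) := by
  set v := q ^ (2 * (k : ℤ))
  have hv : v ^ 2 ≠ 1 := fun h => norm_zpow_ne_one hq0 hq.ne (n := 2 * k * 2) (by omega)
    (by rw [zpow_mul, zpow_ofNat, h, norm_one])
  have hterm (m : ℤ) :
      1 / ((q ^ (2 * m + 1) + q ^ (-2 * m - 1)) *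
          (q ^ (2 * (m - (k : ℤ)) + 1) + q ^ (-2 * (m - (k : ℤ)) - 1))) =
        (1 / (1 + (q ^ (2 * (m - k) + 1)) ^ 2) - 1 / (1 + (q ^ (2 * m + 1)) ^ 2)) /
          (v - v⁻¹) := by
    have hneg (n : ℤ) : q ^ (-2 * n - 1) = (q ^ (2 * n + 1))⁻¹ := by
      rw [← zpow_neg]; ring_nf
    rw [hneg, hneg]
    refine one_div_add_inv_mul_add_inv_of_eq_mul ?_ (zpow_ne_zero _ hq0) (zpow_ne_zero _ hq0)
      (one_add_sq_zpow_ne_zero hq0 hq.ne (by omega))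
      (one_add_sq_zpow_ne_zero hq0 hq.ne (by omega)) hv
    rw [← zpow_add₀ hq0]
    ring_nf
  have hsum := (hasSum_comp_sub_sub_of_summable_sub_step
    (summable_one_div_one_add_sq_zpow_sub_step hq0 hq) k).div_const (v - v⁻¹)
  rw [tsum_congr hterm, hsum.tsum_eq, ← zpow_neg]
  simp
end
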